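/- Let G = (V, E) be a finite acyclic digraph with exactly one source s, and let (V1, E1), (V2, E2) be a separation of G along a pair {u, v} of distinct vertices with s ∈ V1. Assume that v does not dominate u in G. Define H1* = (V1, E1 ∪ {(u, v)}) if v has at least one incoming edge in E2, and H1* = (V1, E1) otherwise. Then for all vertices x, y ∈ V1, x dominates y in H1* if and only if x dominates y in G. -/

import Mathlib

/-- `x` dominates `y` in the digraph with edge set `E`: there is a directed
path with at least one edge from `x` to `y`. -/
def Dominates {α : Type*} (E : Finset (α × α)) (x y : α) : Prop :=
  Relation.TransGen (fun a b => (a, b) ∈ E) x y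

/-- A separation of the finite digraph `(V, E)` along the pair `{u, v}` of
distinct vertices into `H1 = (V1, E1)` and `H2 = (V2, E2)`. -/
structure Separation {α : Type*} [DecidableEq α] (V : Finset α) (E : Finset (α × α))
    (u v : α) (V1 V2 : Finset α) (E1 E2 : Finset (α × α)) : Prop where
  ne : u ≠ v
  vUnion : V1 ∪ V2 = V
  vInter : V1 ∩ V2 = {u, v}
  eDisjoint : Disjoint E1 E2
  eUnion : E1 ∪ E2 = E
  mem1 : ∀ e ∈ E1, e.1 ∈ V1 ∧ e.2 ∈ V1
  mem2 : ∀ e ∈ E2, e.1 ∈ V2 ∧ e.2 ∈ V2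
/-- A vertex `w` is a source of the digraph `(V, E)`: it belongs to `V` and
has no incoming edge in `E`. -/
def IsSource {α : Type*} (V : Finset α) (E : Finset (α × α)) (w : α) : Prop :=
  w ∈ V ∧ ∀ e ∈ E, e.2 ≠ w

/-! If `v` has an in-edge `(w, v)` in `E2`, then `u < v` in `G`: either `w = u`, or `w` lies
outside `V1` and, being reached from the unique source `s ∈ V1`, is reached through `u` or `v`;
acyclicity rules out `v`. So the marker edge adds no dominance. Conversely, a `G`-path between
vertices of `V1` that uses `E2` runs in `E1` up to its first `E2`-edge and after its last one, and
both ends of this middle stretch lie in `V1 ∩ V2 = {u, v}`; acyclicity and `¬ v < u` force it to run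
from `u` to `v`, which then has an in-edge in `E2`. -/

open Relation

theorem Relation.TransGen.left_or_exists_span_right {α : Type*} {r s : α → α → Prop} {x y : α}
    (h : TransGen (fun a b => r a b ∨ s a b) x y) :
    TransGen r x y ∨ ∃ p q, ReflTransGen r x p ∧ (∃ c, s p c) ∧
      TransGen (fun a b => r a b ∨ s a b) p q ∧ (∃ c, s c q) ∧ ReflTransGen r q y := by
  induction h with
  | @single b hb =>
    rcases hb with hr | hs
    · exact .inl (.single hr)
    · exact .inr ⟨x, b, .refl, ⟨b, hs⟩, .single (.inr hs), ⟨x, hs⟩, .refl⟩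
  | @tail b c hxb hbc ih =>
    rcases hbc with hr | hs
    · rcases ih with hxb' | ⟨p, q, hxp, hp, hpq, hq, hqb⟩
      · exact .inl (hxb'.tail hr)
      · exact .inr ⟨p, q, hxp, hp, hpq, hq, hqb.tail hr⟩
    · rcases ih with hxb' | ⟨p, q, hxp, hp, hpq, hq, hqb⟩
      · exact .inr ⟨b, c, hxb'.to_reflTransGen, ⟨c, hs⟩, .single (.inr hs), ⟨b, hs⟩, .refl⟩
      · refine .inr ⟨p, c, hxp, hp, ?_, ⟨b, hs⟩, .refl⟩
        exact (hpq.trans_left (ReflTransGen.mono (fun _ _ => .inl) _ _ hqb)).tail (.inr hs)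

theorem Dominates.mono {α : Type*} {E F : Finset (α × α)} (hEF : E ⊆ F) {x y : α}
    (h : Dominates E x y) : Dominates F x y :=
  TransGen.mono (fun _ _ hab => hEF hab) _ _ h

theorem eq_or_dominates_of_forall_isSource_eq {α : Type*} {V : Finset α} {E : Finset (α × α)}
    {s : α} (hE : ∀ e ∈ E, e.1 ∈ V) (hacyc : ∀ x, ¬ Dominates E x x)
    (huniq : ∀ w, IsSource V E w → w = s) {w : α} (hw : w ∈ V) :
    w = s ∨ Dominates E s w := by
  have : IsStrictOrder α (Dominates E) :=
    { irrefl := hacyc, trans := fun _ _ _ => TransGen.trans }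
  refine (V : Set α).toFinite.wellFoundedOn.induction (r := Dominates E) hw
    (P := fun w => w = s ∨ Dominates E s w) fun w hw ih => ?_
  by_cases hsrc : IsSource V E w
  · exact .inl (huniq w hsrc)
  · obtain ⟨⟨b, w'⟩, hbw, rfl⟩ : ∃ e ∈ E, e.2 = w := by
      by_contra! h
      exact hsrc ⟨hw, h⟩
    have hbw' : Dominates E b w' := .single hbw
    rcases ih b (hE _ hbw) hbw' with rfl | hsb
    · exact .inr hbw'
    · exact .inr (hsb.tail hbw)

theorem Dominates.of_insert {α : Type*} [DecidableEq α] {E F : Finset (α × α)} {u v x y : α}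
    (hEF : E ⊆ F) (huv : Dominates F u v) (h : Dominates (insert (u, v) E) x y) :
    Dominates F x y := by
  refine TransGen.closed (fun a b hab => ?_) _ _ h
  rcases Finset.mem_insert.1 hab with hab | hab
  · obtain ⟨rfl, rfl⟩ := Prod.mk.inj hab
    exact huv
  · exact .single (hEF hab)

namespace Separation

variable {α : Type*} [DecidableEq α] {V V1 V2 : Finset α} {E E1 E2 : Finset (α × α)} {u v : α}

theorem eq_or_eq_of_mem_of_mem (hsep : Separation V E u v V1 V2 E1 E2) {w : α}
    (h1 : w ∈ V1) (h2 : w ∈ V2) : w = u ∨ w = v := by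
  have hw : w ∈ V1 ∩ V2 := Finset.mem_inter.2 ⟨h1, h2⟩
  simpa [hsep.vInter] using hw

theorem mem_or_mem (hsep : Separation V E u v V1 V2 E1 E2) {e : α × α} (he : e ∈ E) :
    e ∈ E1 ∨ e ∈ E2 := by
  rwa [← hsep.eUnion, Finset.mem_union] at he

theorem left_edges_subset (hsep : Separation V E u v V1 V2 E1 E2) : E1 ⊆ E :=
  hsep.eUnion ▸ Finset.subset_union_left

theorem right_edges_subset (hsep : Separation V E u v V1 V2 E1 E2) : E2 ⊆ E :=
  hsep.eUnion ▸ Finset.subset_union_right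

theorem fst_mem (hsep : Separation V E u v V1 V2 E1 E2) {e : α × α} (he : e ∈ E) : e.1 ∈ V := by
  rw [← hsep.vUnion, Finset.mem_union]
  exact (hsep.mem_or_mem he).imp (hsep.mem1 e · |>.1) (hsep.mem2 e · |>.1)

theorem eq_or_eq_of_mem_of_not_mem (hsep : Separation V E u v V1 V2 E1 E2) {a b : α}
    (hab : (a, b) ∈ E) (ha : a ∈ V1) (hb : b ∉ V1) : a = u ∨ a = v := by
  have hab2 : (a, b) ∈ E2 := (hsep.mem_or_mem hab).resolve_left fun h => hb (hsep.mem1 _ h).2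
  exact hsep.eq_or_eq_of_mem_of_mem ha (hsep.mem2 _ hab2).1

theorem dominates_of_mem_of_not_mem (hsep : Separation V E u v V1 V2 E1 E2) {a b : α}
    (h : Dominates E a b) (ha : a ∈ V1) (hb : b ∉ V1) : Dominates E u b ∨ Dominates E v b := by
  induction h with
  | @single b hab =>
    rcases hsep.eq_or_eq_of_mem_of_not_mem hab ha hb with rfl | rfl
    exacts [.inl (.single hab), .inr (.single hab)]
  | @tail c b _ hcb ih =>
    by_cases hc : c ∈ V1
    · rcases hsep.eq_or_eq_of_mem_of_not_mem hcb hc hb with rfl | rfl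
      exacts [.inl (.single hcb), .inr (.single hcb)]
    · exact (ih hc).imp (·.tail hcb) (·.tail hcb)

theorem dominates_of_exists_mem_snd_eq (hsep : Separation V E u v V1 V2 E1 E2)
    (hacyc : ∀ x, ¬ Dominates E x x) {s : α} (huniq : ∀ w, IsSource V E w → w = s)
    (hs1 : s ∈ V1) (hv : ∃ e ∈ E2, e.2 = v) : Dominates E u v := by
  obtain ⟨⟨w, v'⟩, hwv, rfl⟩ := hv
  have hwvE : Dominates E w v' := .single (hsep.right_edges_subset hwv)
  have hw2 : w ∈ V2 := (hsep.mem2 _ hwv).1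
  by_cases hw1 : w ∈ V1
  · rcases hsep.eq_or_eq_of_mem_of_mem hw1 hw2 with rfl | rfl
    · exact hwvE
    · exact absurd hwvE (hacyc _)
  · have hsw : Dominates E s w :=
      (eq_or_dominates_of_forall_isSource_eq (fun _ => hsep.fst_mem) hacyc huniq
        (hsep.vUnion ▸ Finset.mem_union_right _ hw2)).resolve_left fun h => hw1 (h ▸ hs1)
    rcases hsep.dominates_of_mem_of_not_mem hsw hs1 hw1 with h | h
    · exact h.trans hwvE
    · exact absurd (h.trans hwvE) (hacyc _)

theorem dominates_of_dominates (hsep : Separation V E u v V1 V2 E1 E2)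
    (hacyc : ∀ x, ¬ Dominates E x x) (hnd : ¬ Dominates E v u) {F : Finset (α × α)}
    (hF : E1 ⊆ F) (huv : (∃ e ∈ E2, e.2 = v) → Dominates F u v) {x y : α}
    (hx : x ∈ V1) (hy : y ∈ V1) (h : Dominates E x y) : Dominates F x y := by
  have hE1F : ∀ a b, (a, b) ∈ E1 → (a, b) ∈ F := fun _ _ hab => hF hab
  have h' : TransGen (fun a b => (a, b) ∈ E1 ∨ (a, b) ∈ E2) x y :=
    TransGen.mono (fun _ _ => hsep.mem_or_mem) _ _ h
  rcases h'.left_or_exists_span_right with h1 | ⟨p, q, hxp, ⟨c, hpc⟩, hpq, ⟨d, hdq⟩, hqy⟩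
  · exact TransGen.mono hE1F _ _ h1
  have hp1 : p ∈ V1 := by
    rcases hxp.cases_tail with rfl | ⟨_, _, hp⟩
    exacts [hx, (hsep.mem1 _ hp).2]
  have hq1 : q ∈ V1 := by
    rcases hqy.cases_head with rfl | ⟨_, hq, _⟩
    exacts [hy, (hsep.mem1 _ hq).1]
  have hpqE : Dominates E p q :=
    TransGen.mono (fun _ _ hab => hab.elim (hsep.left_edges_subset ·) (hsep.right_edges_subset ·))
      _ _ hpq
  obtain ⟨rfl, rfl⟩ : p = u ∧ q = v := by
    rcases hsep.eq_or_eq_of_mem_of_mem hp1 (hsep.mem2 _ hpc).1 with rfl | rfl <;>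
      rcases hsep.eq_or_eq_of_mem_of_mem hq1 (hsep.mem2 _ hdq).2 with rfl | rfl
    · exact absurd hpqE (hacyc _)
    · exact ⟨rfl, rfl⟩
    · exact absurd hpqE hnd
    · exact absurd hpqE (hacyc _)
  exact TransGen.trans_right (ReflTransGen.mono hE1F _ _ hxp)
    ((huv ⟨_, hdq, rfl⟩).trans_left (ReflTransGen.mono hE1F _ _ hqy))

end Separation

theorem stmt6_general {α : Type*} [DecidableEq α] (V V1 V2 : Finset α)
    (E E1 E2 : Finset (α × α)) (u v s : α)
    (hsep : Separation V E u v V1 V2 E1 E2)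
    (hacyc : ∀ x : α, ¬ Dominates E x x)
    (huniq : ∀ w : α, IsSource V E w → w = s)
    (hs1 : s ∈ V1)
    (hnd : ¬ Dominates E v u) :
    ((∃ e ∈ E2, e.2 = v) →
      ∀ x ∈ V1, ∀ y ∈ V1, (Dominates (insert (u, v) E1) x y ↔ Dominates E x y)) ∧
    (¬ (∃ e ∈ E2, e.2 = v) →
      ∀ x ∈ V1, ∀ y ∈ V1, (Dominates E1 x y ↔ Dominates E x y)) := by
  constructor
  · intro hv x hx y hy
    have huv : Dominates E u v := hsep.dominates_of_exists_mem_snd_eq hacyc huniq hs1 hv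
    exact ⟨Dominates.of_insert hsep.left_edges_subset huv,
      hsep.dominates_of_dominates hacyc hnd (Finset.subset_insert _ _)
        (fun _ => .single (Finset.mem_insert_self _ _)) hx hy⟩
  · intro hv x hx y hy
    exact ⟨Dominates.mono hsep.left_edges_subset,
      hsep.dominates_of_dominates hacyc hnd subset_rfl (absurd · hv) hx hy⟩

/-- If `G` is an acyclic single-source digraph with its source in `V1` and `v`
does not dominate `u` in `G`, then dominance on `V1` is the same in `H1*` as
in `G`, where `H1* = (V1, E1 ∪ {(u, v)})` if `v` has an incoming edge in `E2`
and `H1* = (V1, E1)` otherwise. -/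
theorem stmt6 {α : Type*} [DecidableEq α] (V V1 V2 : Finset α)
    (E E1 E2 : Finset (α × α)) (u v s : α)
    (hsep : Separation V E u v V1 V2 E1 E2)
    (hacyc : ∀ x : α, ¬ Dominates E x x)
    (hsrc : IsSource V E s) (huniq : ∀ w : α, IsSource V E w → w = s)
    (hs1 : s ∈ V1)
    (hnd : ¬ Dominates E v u) :
    ((∃ e ∈ E2, e.2 = v) →
      ∀ x ∈ V1, ∀ y ∈ V1, (Dominates (insert (u, v) E1) x y ↔ Dominates E x y)) ∧
    (¬ (∃ e ∈ E2, e.2 = v) →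
      ∀ x ∈ V1, ∀ y ∈ V1, (Dominates E1 x y ↔ Dominates E x y)) :=
  stmt6_general V V1 V2 E E1 E2 u v s hsep hacyc huniq hs1 hnd
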